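/- arXiv:2408.15951 — 4 statements merged into one kernel-verified Lean document; each statement's English description precedes it below -/
import Mathlib

section
/- If G and H are connected graphs of order at least 2, then the outer general position number of the strong product satisfies gp_o(G ⊠ H) ≥ gp_o(G) · gp_o(H); in fact, if X and Y are outer general position sets of G and H respectively, then X × Y is an outer general position set of G ⊠ H. -/
open SimpleGraph

/-- `u` and `v` are `X`-positionable in `G`: every shortest `u,v`-path meets `X`
only possibly in its endpoints. -/
def Positionable {V : Type*} (G : SimpleGraph V) (X : Set V) (u v : V) : Prop :=
  ∀ p : G.Walk u v, p.length = G.dist u v → ∀ w ∈ p.support, w ∈ X → w = u ∨ w = v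

/-- `X` is a general position set of `G`. -/
def IsGPSet {V : Type*} (G : SimpleGraph V) (X : Set V) : Prop :=
  ∀ u ∈ X, ∀ v ∈ X, Positionable G X u v

/-- `X` is an outer general position set of `G`. -/
def IsOuterGPSet {V : Type*} (G : SimpleGraph V) (X : Set V) : Prop :=
  IsGPSet G X ∧ ∀ u ∈ X, ∀ v ∉ X, Positionable G X u v

/-- `X` is a dual general position set of `G`. -/
def IsDualGPSet {V : Type*} (G : SimpleGraph V) (X : Set V) : Prop :=
  IsGPSet G X ∧ ∀ u ∉ X, ∀ v ∉ X, Positionable G X u v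

/-- `X` is a total general position set of `G`. -/
def IsTotalGPSet {V : Type*} (G : SimpleGraph V) (X : Set V) : Prop :=
  ∀ u v : V, Positionable G X u v

/-- The outer general position number. -/
noncomputable def gpo {V : Type*} (G : SimpleGraph V) : ℕ :=
  sSup {n | ∃ X : Set V, IsOuterGPSet G X ∧ X.ncard = n}

/-- The dual general position number. -/
noncomputable def gpd {V : Type*} (G : SimpleGraph V) : ℕ :=
  sSup {n | ∃ X : Set V, IsDualGPSet G X ∧ X.ncard = n}

/-- The total general position number. -/
noncomputable def gpt {V : Type*} (G : SimpleGraph V) : ℕ :=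
  sSup {n | ∃ X : Set V, IsTotalGPSet G X ∧ X.ncard = n}

/-- The closed neighborhood `N[u]`. -/
def closedNbhd {V : Type*} (G : SimpleGraph V) (u : V) : Set V :=
  insert u (G.neighborSet u)

/-- A vertex is simplicial if its closed neighborhood induces a complete subgraph. -/
def IsSimplicial {V : Type*} (G : SimpleGraph V) (u : V) : Prop :=
  ∀ x ∈ closedNbhd G u, ∀ y ∈ closedNbhd G u, x ≠ y → G.Adj x y

/-- `s(G)`, the number of simplicial vertices. -/
noncomputable def simplicialNum {V : Type*} (G : SimpleGraph V) : ℕ :=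
  {u | IsSimplicial G u}.ncard

/-- `u` is maximally distant from `v`. -/
def MaxDistant {V : Type*} (G : SimpleGraph V) (u v : V) : Prop :=
  ∀ w, G.Adj u w → G.dist v w ≤ G.dist v u

/-- `u` and `v` are mutually maximally distant. -/
def MMD {V : Type*} (G : SimpleGraph V) (u v : V) : Prop :=
  MaxDistant G u v ∧ MaxDistant G v u

/-- `b(G)`, the number of boundary vertices (vertices MMD with some vertex). -/
noncomputable def boundaryNum {V : Type*} (G : SimpleGraph V) : ℕ :=
  {u | ∃ v, MMD G u v}.ncard

/-- `u` and `v` are true twins: distinct with equal closed neighborhoods. -/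
def TrueTwins {V : Type*} (G : SimpleGraph V) (u v : V) : Prop :=
  u ≠ v ∧ closedNbhd G u = closedNbhd G v

/-- The independence number of `G`. -/
noncomputable def indepNum {V : Type*} (G : SimpleGraph V) : ℕ :=
  sSup {n | ∃ S : Set V, (∀ u ∈ S, ∀ v ∈ S, u ≠ v → ¬ G.Adj u v) ∧ S.ncard = n}

/-- The `k`-independence number `α_k(G)`. -/
noncomputable def kIndepNum {V : Type*} (G : SimpleGraph V) (k : ℕ) : ℕ :=
  sSup {n | ∃ S : Set V, (∀ u ∈ S, ∀ v ∈ S, u ≠ v → k < G.dist u v) ∧ S.ncard = n}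

/-- `G` has diameter `k`. -/
def HasDiam {V : Type*} (G : SimpleGraph V) (k : ℕ) : Prop :=
  (∀ u v, G.dist u v ≤ k) ∧ ∃ u v, G.dist u v = k

/-- The strong product `G ⊠ H`. -/
def StrongProd {α β : Type*} (G : SimpleGraph α) (H : SimpleGraph β) : SimpleGraph (α × β) where
  Adj x y := (x.1 = y.1 ∧ H.Adj x.2 y.2) ∨ (G.Adj x.1 y.1 ∧ x.2 = y.2) ∨
    (G.Adj x.1 y.1 ∧ H.Adj x.2 y.2)
  symm.symm x y h := by
    rcases h with ⟨h1, h2⟩ | ⟨h1, h2⟩ | ⟨h1, h2⟩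
    · exact Or.inl ⟨h1.symm, h2.symm⟩
    · exact Or.inr (Or.inl ⟨h1.symm, h2.symm⟩)
    · exact Or.inr (Or.inr ⟨h1.symm, h2.symm⟩)
  loopless.irrefl x h := by
    rcases h with ⟨_, h2⟩ | ⟨h1, _⟩ | ⟨h1, _⟩
    · exact H.loopless.irrefl _ h2
    · exact G.loopless.irrefl _ h1
    · exact G.loopless.irrefl _ h1

/-- The lexicographic product `G ∘ H`. -/
def LexProd {α β : Type*} (G : SimpleGraph α) (H : SimpleGraph β) : SimpleGraph (α × β) where
  Adj x y := G.Adj x.1 y.1 ∨ (x.1 = y.1 ∧ H.Adj x.2 y.2)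
  symm.symm x y h := by
    rcases h with h1 | ⟨h1, h2⟩
    · exact Or.inl h1.symm
    · exact Or.inr ⟨h1.symm, h2.symm⟩
  loopless.irrefl x h := by
    rcases h with h1 | ⟨_, h2⟩
    · exact G.loopless.irrefl _ h1
    · exact H.loopless.irrefl _ h2

/-! Outer general position sets are exactly the sets of pairwise mutually maximally distant
vertices, and distances in `G ⊠ H` are maxima of coordinate distances. A step from `(a, b)` moves
each coordinate to a neighbour or leaves it in place. In a coordinate where `(a, b)` differs from
`(g, h)`, maximal distance keeps the distance from growing; in a coordinate where they agree, the
new distance is at most `1`, which is at most the distance between the distinct vertices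
`(a, b)` and `(g, h)`. -/

section GeneralPosition

variable {V : Type*} {G : SimpleGraph V} {X : Set V} {u v : V}

lemma SimpleGraph.Walk.dist_getVert_of_length_eq_dist (p : G.Walk u v)
    (hp : p.length = G.dist u v) {n : ℕ} (hn : n ≤ p.length) : G.dist u (p.getVert n) = n := by
  have h := length_eq_dist_of_subwalk hp (p.isSubwalk_take n)
  rwa [Walk.take_length, min_eq_left hn, eq_comm] at h

lemma positionable_of_maxDistant (h : ∀ w ∈ X, w ≠ u → MaxDistant G w u) :
    Positionable G X u v := by
  intro p hp w hw hwX
  by_contra! hne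
  obtain ⟨n, rfl, hn⟩ := Walk.mem_support_iff_exists_getVert.mp hw
  have hlt : n < p.length :=
    lt_of_le_of_ne hn fun hlen => hne.2 (by rw [hlen, Walk.getVert_length])
  have hstep := h _ hwX hne.1 _ (p.adj_getVert_succ hlt)
  rw [p.dist_getVert_of_length_eq_dist hp hlt, p.dist_getVert_of_length_eq_dist hp hn] at hstep
  omega

lemma IsOuterGPSet.positionable (hX : IsOuterGPSet G X) (hu : u ∈ X) (v : V) :
    Positionable G X u v := by
  by_cases hv : v ∈ X
  · exact hX.1 u hu v hv
  · exact hX.2 u hu v hv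

lemma IsOuterGPSet.maxDistant (hX : IsOuterGPSet G X) (hu : u ∈ X) (hv : v ∈ X) (huv : u ≠ v) :
    MaxDistant G u v := by
  intro w huw
  by_contra! hlt
  have hvu : G.Reachable v u := (Reachable.of_dist_ne_zero (by omega)).trans huw.symm.reachable
  obtain ⟨q, hq⟩ := hvu.exists_walk_length_eq_dist
  -- a shortest `v,u`-path followed by the edge `uw` is a shortest `v,w`-path through `u`
  have hgeo : (q.concat huw).length = G.dist v w := by
    have := dist_le (q.concat huw)
    rw [Walk.length_concat] at this ⊢
    omega
  rcases hX.positionable hv w _ hgeo u (by simp) hu with h | h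
  · exact huv h
  · exact huw.ne h

theorem isOuterGPSet_iff_pairwise_mmd : IsOuterGPSet G X ↔ X.Pairwise (MMD G) := by
  refine ⟨fun hX u hu v hv huv => ⟨hX.maxDistant hu hv huv, hX.maxDistant hv hu huv.symm⟩,
    fun hX => ?_⟩
  have hpos : ∀ u ∈ X, ∀ v, Positionable G X u v := fun u hu _ =>
    positionable_of_maxDistant fun w hw hwu => (hX hw hu hwu).1
  exact ⟨fun u hu v _ => hpos u hu v, fun u hu v _ => hpos u hu v⟩

lemma isOuterGPSet_empty : IsOuterGPSet G ∅ :=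
  ⟨by simp [IsGPSet], by simp⟩

lemma bddAbove_ncard_isOuterGPSet [Finite V] :
    BddAbove {n | ∃ X : Set V, IsOuterGPSet G X ∧ X.ncard = n} := by
  refine ⟨Nat.card V, ?_⟩
  rintro _ ⟨X, -, rfl⟩
  exact Set.ncard_le_card X

lemma exists_isOuterGPSet_ncard_eq_gpo [Finite V] (G : SimpleGraph V) :
    ∃ X : Set V, IsOuterGPSet G X ∧ X.ncard = gpo G := by
  have hne : {n | ∃ X : Set V, IsOuterGPSet G X ∧ X.ncard = n}.Nonempty :=
    ⟨0, ∅, isOuterGPSet_empty, Set.ncard_empty V⟩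
  exact Nat.sSup_mem hne bddAbove_ncard_isOuterGPSet

lemma IsOuterGPSet.ncard_le_gpo [Finite V] (hX : IsOuterGPSet G X) : X.ncard ≤ gpo G :=
  le_csSup bddAbove_ncard_isOuterGPSet ⟨X, hX, rfl⟩

lemma dist_le_length_of_eq_or_adj {W : Type*} {H : SimpleGraph W} (f : V → W)
    (hf : ∀ x y, G.Adj x y → f x = f y ∨ H.Adj (f x) (f y)) :
    ∀ {u v : V} (p : G.Walk u v), H.dist (f u) (f v) ≤ p.length
  | _, _, .nil => by simp
  | _, w, .cons hxy p => by
    have ih := dist_le_length_of_eq_or_adj f hf p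
    rw [Walk.length_cons]
    rcases hf _ _ hxy with heq | hadj
    · rw [heq]
      omega
    · have := hadj.reachable.dist_triangle_left (f w)
      rw [dist_eq_one_iff_adj.mpr hadj] at this
      omega

lemma dist_le_max_one_of_maxDistant {a a' g : V}
    (ha : a ≠ g → MaxDistant G a g) (ha' : a = a' ∨ G.Adj a a') :
    G.dist g a' ≤ max (G.dist g a) 1 := by
  rcases ha' with rfl | hadj
  · exact le_max_left _ _
  by_cases hag : a = g
  · subst hag
    exact (dist_eq_one_iff_adj.mpr hadj).le.trans (le_max_right _ _)
  · exact (ha hag a' hadj).trans (le_max_left _ _)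

end GeneralPosition

section StrongProd

variable {α β : Type*} {G : SimpleGraph α} {H : SimpleGraph β}

lemma eq_or_adj_of_strongProd_adj {x y : α × β} (hxy : (StrongProd G H).Adj x y) :
    (x.1 = y.1 ∨ G.Adj x.1 y.1) ∧ (x.2 = y.2 ∨ H.Adj x.2 y.2) := by
  rcases hxy with ⟨h1, h2⟩ | ⟨h1, h2⟩ | ⟨h1, h2⟩
  · exact ⟨.inl h1, .inr h2⟩
  · exact ⟨.inr h1, .inl h2⟩
  · exact ⟨.inr h1, .inr h2⟩

lemma exists_strongProd_walk_length_eq_max {g g' : α} (p : G.Walk g g') {h h' : β}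
    (q : H.Walk h h') :
    ∃ r : (StrongProd G H).Walk (g, h) (g', h'), r.length = max p.length q.length := by
  induction p generalizing h with
  | @nil g =>
    let inr : H →g StrongProd G H := ⟨fun b => (g, b), fun hb => .inl ⟨rfl, hb⟩⟩
    exact ⟨q.map inr, by simp⟩
  | @cons a a₁ a' ha p ih =>
    cases q with
    | nil =>
      let inl : G →g StrongProd G H := ⟨fun a => (a, h'), fun ha => .inr (.inl ⟨ha, rfl⟩)⟩
      exact ⟨(Walk.cons ha p).map inl, by simp⟩
    | @cons _ b₁ _ hb q =>
      obtain ⟨r, hr⟩ := ih q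
      have hab : (StrongProd G H).Adj (a, h) (a₁, b₁) := .inr (.inr ⟨ha, hb⟩)
      exact ⟨.cons hab r, by simp [hr]⟩

theorem strongProd_dist (hG : G.Connected) (hH : H.Connected) (x y : α × β) :
    (StrongProd G H).dist x y = max (G.dist x.1 y.1) (H.dist x.2 y.2) := by
  obtain ⟨p, hp⟩ := hG.exists_walk_length_eq_dist x.1 y.1
  obtain ⟨q, hq⟩ := hH.exists_walk_length_eq_dist x.2 y.2
  obtain ⟨r, hr⟩ := exists_strongProd_walk_length_eq_max p q
  refine le_antisymm ((dist_le r).trans_eq (by rw [hr, hp, hq])) ?_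
  obtain ⟨s, hs⟩ := r.reachable.exists_walk_length_eq_dist
  rw [← hs]
  exact max_le (dist_le_length_of_eq_or_adj Prod.fst
      (fun _ _ hxy => (eq_or_adj_of_strongProd_adj hxy).1) s)
    (dist_le_length_of_eq_or_adj Prod.snd (fun _ _ hxy => (eq_or_adj_of_strongProd_adj hxy).2) s)

lemma maxDistant_strongProd (hG : G.Connected) (hH : H.Connected) {a g : α} {b h : β}
    (ha : a ≠ g → MaxDistant G a g) (hb : b ≠ h → MaxDistant H b h) (hne : (a, b) ≠ (g, h)) :
    MaxDistant (StrongProd G H) (a, b) (g, h) := by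
  rintro ⟨a', b'⟩ hadj
  obtain ⟨ha', hb'⟩ := eq_or_adj_of_strongProd_adj hadj
  have hpos : 1 ≤ max (G.dist g a) (H.dist h b) := by
    obtain hag | hbh : a ≠ g ∨ b ≠ h := by rwa [Ne, Prod.mk.injEq, not_and_or] at hne
    · exact le_max_of_le_left (hG.pos_dist_of_ne (Ne.symm hag))
    · exact le_max_of_le_right (hH.pos_dist_of_ne (Ne.symm hbh))
  rw [strongProd_dist hG hH, strongProd_dist hG hH]
  calc max (G.dist g a') (H.dist h b')
      ≤ max (max (G.dist g a) 1) (max (H.dist h b) 1) :=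
        max_le_max (dist_le_max_one_of_maxDistant ha ha') (dist_le_max_one_of_maxDistant hb hb')
    _ = max (G.dist g a) (H.dist h b) := by rw [max_max_max_comm, max_self, max_eq_left hpos]

theorem IsOuterGPSet.prod (hG : G.Connected) (hH : H.Connected) {X : Set α} {Y : Set β}
    (hX : IsOuterGPSet G X) (hY : IsOuterGPSet H Y) : IsOuterGPSet (StrongProd G H) (X ×ˢ Y) := by
  rw [isOuterGPSet_iff_pairwise_mmd] at hX hY ⊢
  rintro ⟨a, b⟩ ⟨ha, hb⟩ ⟨g, h⟩ ⟨hg, hh⟩ hne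
  exact ⟨maxDistant_strongProd hG hH (fun hag => (hX ha hg hag).1) (fun hbh => (hY hb hh hbh).1)
      hne,
    maxDistant_strongProd hG hH (fun hga => (hX hg ha hga).1) (fun hhb => (hY hh hb hhb).1)
      hne.symm⟩

end StrongProd

theorem gpo_strongProd_lower_general {α β : Type*} [Fintype α] [Fintype β]
    (G : SimpleGraph α) (H : SimpleGraph β) (hG : G.Connected) (hH : H.Connected) :
    gpo G * gpo H ≤ gpo (StrongProd G H) ∧
    ∀ (X : Set α) (Y : Set β), IsOuterGPSet G X → IsOuterGPSet H Y →
      IsOuterGPSet (StrongProd G H) (X ×ˢ Y) := by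
  refine ⟨?_, fun X Y hX hY => hX.prod hG hH hY⟩
  obtain ⟨X, hX, hXcard⟩ := exists_isOuterGPSet_ncard_eq_gpo G
  obtain ⟨Y, hY, hYcard⟩ := exists_isOuterGPSet_ncard_eq_gpo H
  calc gpo G * gpo H = (X ×ˢ Y).ncard := by rw [Set.ncard_prod, hXcard, hYcard]
    _ ≤ gpo (StrongProd G H) := (hX.prod hG hH hY).ncard_le_gpo

/-- gp_o(G ⊠ H) ≥ gp_o(G)·gp_o(H); products of outer general position
sets are outer general position sets of the strong product. -/
theorem gpo_strongProd_lower {α β : Type*} [Fintype α] [Fintype β]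
    (G : SimpleGraph α) (H : SimpleGraph β) (hG : G.Connected) (hH : H.Connected)
    (h2G : 2 ≤ Fintype.card α) (h2H : 2 ≤ Fintype.card β) :
    gpo G * gpo H ≤ gpo (StrongProd G H) ∧
    ∀ (X : Set α) (Y : Set β), IsOuterGPSet G X → IsOuterGPSet H Y →
      IsOuterGPSet (StrongProd G H) (X ×ˢ Y) :=
  gpo_strongProd_lower_general G H hG hH
end

section
/- If G and H are connected graphs, then s(G)·s(H) ≤ gp_d(G ⊠ H), where s denotes the number of simplicial vertices and gp_d the dual general position number of the strong product. -/
open SimpleGraph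

/-!
A simplicial vertex never lies in the interior of a shortest path: its two neighbours on the
path would be equal or adjacent, so the path could be shortened. Hence every set of simplicial
vertices is in total, and in particular dual, general position. In `G ⊠ H` the closed
neighbourhood of `(a, b)` is `N[a] × N[b]`, so pairs of simplicial vertices are simplicial.
-/

namespace SimpleGraph.Walk

variable {V : Type*} {G : SimpleGraph V}

lemma exists_isSubwalk_of_mem_support_of_ne {u v w : V} (p : G.Walk u v)
    (hw : w ∈ p.support) (hwu : w ≠ u) (hwv : w ≠ v) :
    ∃ (x y : V) (hx : G.Adj x w) (hy : G.Adj w y), (cons hx (cons hy nil)).IsSubwalk p := by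
  induction p with
  | nil => simp_all
  | @cons u x v h q ih =>
    have hwq : w ∈ q.support := (List.mem_cons.mp hw).resolve_left hwu
    by_cases hwx : w = x
    · subst hwx
      cases q with
      | nil => exact absurd rfl hwv
      | cons h' q' => exact ⟨u, _, h, h', nil, q', rfl⟩
    · obtain ⟨a, b, ha, hb, hsub⟩ := ih hwq hwx hwv
      exact ⟨a, b, ha, hb, hsub.cons h⟩

end SimpleGraph.Walk

section Simplicial

variable {V : Type*} {G : SimpleGraph V}

lemma IsSimplicial.dist_le_one {w x y : V} (hw : IsSimplicial G w)
    (hx : x ∈ closedNbhd G w) (hy : y ∈ closedNbhd G w) : G.dist x y ≤ 1 := by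
  by_cases hxy : x = y
  · simp [hxy]
  · exact (dist_eq_one_iff_adj.mpr (hw x hx y hy hxy)).le

lemma IsSimplicial.eq_or_eq_of_mem_support {u v w : V} (hw : IsSimplicial G w)
    (p : G.Walk u v) (hp : p.length = G.dist u v) (hmem : w ∈ p.support) : w = u ∨ w = v := by
  by_contra! hne
  obtain ⟨x, y, hx, hy, hsub⟩ := p.exists_isSubwalk_of_mem_support_of_ne hmem hne.1 hne.2
  have hxy : 2 = G.dist x y := length_eq_dist_of_subwalk hp hsub
  have := hw.dist_le_one (Or.inr hx.symm) (Or.inr hy)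
  omega

lemma isTotalGPSet_of_forall_isSimplicial {X : Set V} (hX : ∀ x ∈ X, IsSimplicial G x) :
    IsTotalGPSet G X :=
  fun _ _ p hp w hw hwX ↦ (hX w hwX).eq_or_eq_of_mem_support p hp hw

lemma IsTotalGPSet.isDualGPSet {X : Set V} (h : IsTotalGPSet G X) : IsDualGPSet G X :=
  ⟨fun u _ v _ ↦ h u v, fun u _ v _ ↦ h u v⟩

lemma IsDualGPSet.ncard_le_gpd [Finite V] {X : Set V} (h : IsDualGPSet G X) :
    X.ncard ≤ gpd G :=
  le_csSup ⟨Nat.card V, by rintro n ⟨Y, -, rfl⟩; exact Y.ncard_le_card⟩ ⟨X, h, rfl⟩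

end Simplicial

section StrongProd

variable {α β : Type*} {G : SimpleGraph α} {H : SimpleGraph β}

lemma strongProd_adj_iff {x y : α × β} :
    (StrongProd G H).Adj x y ↔
      x ≠ y ∧ (x.1 = y.1 ∨ G.Adj x.1 y.1) ∧ (x.2 = y.2 ∨ H.Adj x.2 y.2) := by
  obtain ⟨x₁, x₂⟩ := x
  obtain ⟨y₁, y₂⟩ := y
  simp only [StrongProd, ne_eq, Prod.mk.injEq]
  constructor
  · rintro (⟨rfl, h⟩ | ⟨h, rfl⟩ | ⟨h₁, h₂⟩)
    · exact ⟨fun hxy ↦ h.ne hxy.2, .inl rfl, .inr h⟩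
    · exact ⟨fun hxy ↦ h.ne hxy.1, .inr h, .inl rfl⟩
    · exact ⟨fun hxy ↦ h₁.ne hxy.1, .inr h₁, .inr h₂⟩
  · rintro ⟨hne, rfl | h₁, rfl | h₂⟩
    · exact absurd ⟨rfl, rfl⟩ hne
    · exact .inl ⟨rfl, h₂⟩
    · exact .inr (.inl ⟨h₁, rfl⟩)
    · exact .inr (.inr ⟨h₁, h₂⟩)

lemma mem_closedNbhd_strongProd {a : α} {b : β} {x : α × β}
    (hx : x ∈ closedNbhd (StrongProd G H) (a, b)) :
    x.1 ∈ closedNbhd G a ∧ x.2 ∈ closedNbhd H b := by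
  rcases hx with rfl | hx
  · exact ⟨.inl rfl, .inl rfl⟩
  · obtain ⟨-, h₁, h₂⟩ := strongProd_adj_iff.mp hx
    exact ⟨h₁.imp Eq.symm id, h₂.imp Eq.symm id⟩

lemma IsSimplicial.strongProd {a : α} {b : β} (ha : IsSimplicial G a) (hb : IsSimplicial H b) :
    IsSimplicial (StrongProd G H) (a, b) := by
  intro x hx y hy hxy
  obtain ⟨hx₁, hx₂⟩ := mem_closedNbhd_strongProd hx
  obtain ⟨hy₁, hy₂⟩ := mem_closedNbhd_strongProd hy
  exact strongProd_adj_iff.mpr ⟨hxy, (em _).imp_right (ha _ hx₁ _ hy₁),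
    (em _).imp_right (hb _ hx₂ _ hy₂)⟩

end StrongProd

theorem gpd_strongProd_lower_general {α β : Type*} [Fintype α] [Fintype β]
    (G : SimpleGraph α) (H : SimpleGraph β) :
    simplicialNum G * simplicialNum H ≤ gpd (StrongProd G H) := by
  have hsimp : ∀ x ∈ {a | IsSimplicial G a} ×ˢ {b | IsSimplicial H b},
      IsSimplicial (StrongProd G H) x :=
    fun _ hx ↦ hx.1.strongProd hx.2
  calc simplicialNum G * simplicialNum H
      = ({a | IsSimplicial G a} ×ˢ {b | IsSimplicial H b}).ncard := Set.ncard_prod.symm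
    _ ≤ gpd (StrongProd G H) :=
      (isTotalGPSet_of_forall_isSimplicial hsimp).isDualGPSet.ncard_le_gpd

/-- s(G)·s(H) ≤ gp_d(G ⊠ H). -/
theorem gpd_strongProd_lower {α β : Type*} [Fintype α] [Fintype β]
    (G : SimpleGraph α) (H : SimpleGraph β) (hG : G.Connected) (hH : H.Connected) :
    simplicialNum G * simplicialNum H ≤ gpd (StrongProd G H) :=
  gpd_strongProd_lower_general G H
end

section
/- If G and H are connected graphs, then gp_d(G ⊠ H) ≤ s(G)·n(H) + s(H)·n(G) − s(G)·s(H), where n denotes order and s the number of simplicial vertices. -/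
open SimpleGraph

/-!
If `(g, h)` lies in a dual general position set `X` of `G ⊠ H` with neither `g` nor `h`
simplicial, pick non-adjacent neighbours `g₁, g₂` of `g` and `h₁, h₂` of `h`. The vertices
`(g₁, h₁)`, `(g₂, h₂)`, `(g₂, h₁)` are pairwise non-adjacent common neighbours of `(g, h)`, so each
pair is joined by a geodesic of length two through `(g, h) ∈ X`. Since both `X` and its complement
are in general position, exactly one vertex of each pair lies in `X`, which is impossible for three
vertices. Hence `X` lies in the set of vertices with a simplicial coordinate, whose size is the bound
by inclusion–exclusion.
-/

lemma exists_adj_adj_not_adj_of_not_isSimplicial {V : Type*} {G : SimpleGraph V} {g : V}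
    (h : ¬ IsSimplicial G g) :
    ∃ x y, G.Adj g x ∧ G.Adj g y ∧ x ≠ y ∧ ¬ G.Adj x y := by
  simp only [IsSimplicial, closedNbhd, Set.mem_insert_iff, mem_neighborSet, not_forall] at h
  obtain ⟨x, hx | hx, y, hy | hy, hne, hnadj⟩ := h <;> subst_vars
  · exact absurd rfl hne
  · exact absurd hy hnadj
  · exact absurd hx.symm hnadj
  · exact ⟨x, y, hx, hy, hne, hnadj⟩

section InducedPath

variable {V : Type*} {Γ : SimpleGraph V} {X : Set V} {c m d : V}

lemma not_positionable_of_induced_path (hcm : Γ.Adj c m) (hmd : Γ.Adj m d)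
    (hcd : ¬ Γ.Adj c d) (hne : c ≠ d) (hm : m ∈ X) : ¬ Positionable Γ X c d := by
  intro hpos
  have hdist : Γ.dist c d = 2 := by
    simp [SimpleGraph.dist, edist_eq_two_iff.mpr ⟨hne, hcd, ⟨m, hcm, hmd.symm⟩⟩]
  rcases hpos (.cons hcm (.cons hmd .nil)) hdist.symm m (by simp) hm with rfl | rfl
  · exact Γ.loopless.irrefl _ hcm
  · exact Γ.loopless.irrefl _ hmd

lemma IsDualGPSet.mem_iff_not_mem_of_induced_path (hX : IsDualGPSet Γ X)
    (hcm : Γ.Adj c m) (hmd : Γ.Adj m d) (hcd : ¬ Γ.Adj c d) (hne : c ≠ d) (hm : m ∈ X) :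
    c ∈ X ↔ d ∉ X := by
  have := not_positionable_of_induced_path hcm hmd hcd hne hm
  constructor
  · exact fun hc hd ↦ this (hX.1 c hc d hd)
  · exact fun hd ↦ by_contra fun hc ↦ this (hX.2 c hc d hd)

end InducedPath

namespace StrongProd

variable {α β : Type*} {G : SimpleGraph α} {H : SimpleGraph β} {g g' : α} {h h' : β}

lemma adj_of_adj_of_adj (hg : G.Adj g g') (hh : H.Adj h h') :
    (StrongProd G H).Adj (g, h) (g', h') :=
  .inr (.inr ⟨hg, hh⟩)

lemma not_adj_of_ne_of_not_adj_left (hne : g ≠ g') (hg : ¬ G.Adj g g') :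
    ¬ (StrongProd G H).Adj (g, h) (g', h') := by
  rintro (⟨e, _⟩ | ⟨e, _⟩ | ⟨e, _⟩)
  exacts [hne e, hg e, hg e]

lemma not_adj_of_ne_of_not_adj_right (hne : h ≠ h') (hh : ¬ H.Adj h h') :
    ¬ (StrongProd G H).Adj (g, h) (g', h') := by
  rintro (⟨_, e⟩ | ⟨_, e⟩ | ⟨_, e⟩)
  exacts [hh e, hne e, hh e]

end StrongProd

lemma IsDualGPSet.strongProd_subset_simplicial {α β : Type*} {G : SimpleGraph α} {H : SimpleGraph β}
    {X : Set (α × β)} (hX : IsDualGPSet (StrongProd G H) X) :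
    X ⊆ {p | IsSimplicial G p.1 ∨ IsSimplicial H p.2} := by
  rintro ⟨g, h⟩ hgh
  by_contra hbad
  simp only [Set.mem_ofPred_eq, not_or] at hbad
  obtain ⟨g₁, g₂, hg₁, hg₂, hg, hgnadj⟩ := exists_adj_adj_not_adj_of_not_isSimplicial hbad.1
  obtain ⟨h₁, h₂, hh₁, hh₂, hh, hhnadj⟩ := exists_adj_adj_not_adj_of_not_isSimplicial hbad.2
  have hab := hX.mem_iff_not_mem_of_induced_path (c := (g₁, h₁)) (d := (g₂, h₂))
    (StrongProd.adj_of_adj_of_adj hg₁.symm hh₁.symm) (StrongProd.adj_of_adj_of_adj hg₂ hh₂)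
    (StrongProd.not_adj_of_ne_of_not_adj_left hg hgnadj) (by simp [hg]) hgh
  have hac := hX.mem_iff_not_mem_of_induced_path (c := (g₁, h₁)) (d := (g₂, h₁))
    (StrongProd.adj_of_adj_of_adj hg₁.symm hh₁.symm) (StrongProd.adj_of_adj_of_adj hg₂ hh₁)
    (StrongProd.not_adj_of_ne_of_not_adj_left hg hgnadj) (by simp [hg]) hgh
  have hbc := hX.mem_iff_not_mem_of_induced_path (c := (g₂, h₂)) (d := (g₂, h₁))
    (StrongProd.adj_of_adj_of_adj hg₂.symm hh₂.symm) (StrongProd.adj_of_adj_of_adj hg₂ hh₁)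
    (StrongProd.not_adj_of_ne_of_not_adj_right hh.symm fun e ↦ hhnadj e.symm) (by simp [hh.symm])
    hgh
  tauto

lemma Set.ncard_prod_univ_union_univ_prod {α β : Type*} [Finite α] [Finite β]
    (s : Set α) (t : Set β) :
    (s ×ˢ (univ : Set β) ∪ (univ : Set α) ×ˢ t).ncard =
      s.ncard * Nat.card β + t.ncard * Nat.card α - s.ncard * t.ncard := by
  have hinter : s ×ˢ (univ : Set β) ∩ (univ : Set α) ×ˢ t = s ×ˢ t := by
    ext ⟨a, b⟩
    simp [and_comm]
  have := ncard_union_add_ncard_inter (s ×ˢ (univ : Set β)) ((univ : Set α) ×ˢ t)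
  rw [hinter, ncard_prod, ncard_prod, ncard_prod, ncard_univ, ncard_univ] at this
  rw [mul_comm (Nat.card α)] at this
  omega

theorem gpd_strongProd_upper_general {α β : Type*} [Fintype α] [Fintype β]
    (G : SimpleGraph α) (H : SimpleGraph β) :
    gpd (StrongProd G H) ≤
      simplicialNum G * Fintype.card β + simplicialNum H * Fintype.card α -
        simplicialNum G * simplicialNum H := by
  have hcover : {p : α × β | IsSimplicial G p.1 ∨ IsSimplicial H p.2} =
      {g | IsSimplicial G g} ×ˢ Set.univ ∪ Set.univ ×ˢ {h | IsSimplicial H h} := by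
    ext
    simp
  simp only [← Nat.card_eq_fintype_card, simplicialNum,
    ← Set.ncard_prod_univ_union_univ_prod, ← hcover]
  refine csSup_le' ?_
  rintro n ⟨X, hX, rfl⟩
  exact Set.ncard_le_ncard hX.strongProd_subset_simplicial

/-- gp_d(G ⊠ H) ≤ s(G)·n(H) + s(H)·n(G) − s(G)·s(H). -/
theorem gpd_strongProd_upper {α β : Type*} [Fintype α] [Fintype β]
    (G : SimpleGraph α) (H : SimpleGraph β) (hG : G.Connected) (hH : H.Connected) :
    gpd (StrongProd G H) ≤
      simplicialNum G * Fintype.card β + simplicialNum H * Fintype.card α -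
        simplicialNum G * simplicialNum H :=
  gpd_strongProd_upper_general G H
end

section
/- If G and H are connected graphs of order at least 2, then the total general position number of G∘H equals s(G)·n(H) if H is complete, and 0 otherwise. -/
open SimpleGraph

/-!
A simplicial vertex is never internal on a geodesic, while a non-simplicial vertex `x` is internal
on the geodesic `a x b` through two non-adjacent neighbours; hence the total general position sets
are exactly the sets of simplicial vertices, and `gp_t = s`. In `G ∘ K_n` the closed neighbourhood
of `(g, h)` is `N[g] × V(K_n)`, so `(g, h)` is simplicial iff `g` is. If `H` is not complete, the
closed neighbourhood of any `(g, h)` contains two non-adjacent vertices of the `H`-layer over a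
neighbour of `g`, so no vertex is simplicial.
-/

namespace IsSimplicial

variable {V : Type*} {G : SimpleGraph V} {w : V}

lemma adj_or_eq_of_adj (hw : IsSimplicial G w) {a b : V} (ha : G.Adj w a) (hb : G.Adj w b) :
    G.Adj a b ∨ a = b := by
  by_cases hab : a = b
  · exact .inr hab
  · exact .inl (hw a (.inr ha) b (.inr hb) hab)

/-- Its two neighbours on a geodesic through it could be joined directly, shortening the
geodesic. -/
lemma eq_or_eq_of_mem_support_s17 (hw : IsSimplicial G w) {u v : V} (p : G.Walk u v)
    (hp : p.length = G.dist u v) (hwp : w ∈ p.support) : w = u ∨ w = v := by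
  by_contra! hne
  obtain ⟨q, r, rfl⟩ := Walk.mem_support_iff_exists_append.mp hwp
  obtain ⟨a, hwa, q', hq⟩ := Walk.exists_eq_cons_of_ne hne.1 q.reverse
  obtain ⟨b, hwb, r', rfl⟩ := Walk.exists_eq_cons_of_ne hne.2 r
  have hq_len : q.length = q'.length + 1 := by
    rw [← Walk.length_reverse q, hq, Walk.length_cons]
  obtain ⟨s, hs⟩ := (hwa.reachable.symm.trans hwb.reachable).exists_walk_length_eq_dist
  have hs_le : s.length ≤ 1 := by
    rcases hw.adj_or_eq_of_adj hwa hwb with hab | rfl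
    · exact hs.trans_le (dist_eq_one_iff_adj.mpr hab).le
    · simp [hs]
  have := dist_le (q'.reverse.append (s.append r'))
  simp only [Walk.length_append, Walk.length_cons, Walk.length_reverse] at this hp
  omega

end IsSimplicial

section TotalGeneralPosition

variable {V : Type*} {G : SimpleGraph V}

lemma not_positionable_of_adj_of_adj {X : Set V} {x a b : V} (hx : x ∈ X) (hxa : G.Adj x a)
    (hxb : G.Adj x b) (hab : a ≠ b) (hnab : ¬ G.Adj a b) : ¬ Positionable G X a b := by
  intro hX
  let p : G.Walk a b := .cons hxa.symm (.cons hxb .nil)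
  have hp : p.length = G.dist a b := by
    have h1 := (Walk.reachable p).one_lt_dist_of_ne_of_not_adj hab hnab
    have h2 := dist_le p
    simp only [p, Walk.length_cons, Walk.length_nil] at h1 h2 ⊢
    omega
  rcases hX p hp x (by simp [p]) hx with rfl | rfl
  · exact G.loopless.irrefl _ hxa
  · exact G.loopless.irrefl _ hxb

lemma isTotalGPSet_iff_forall_isSimplicial {X : Set V} :
    IsTotalGPSet G X ↔ ∀ x ∈ X, IsSimplicial G x := by
  refine ⟨fun hX x hx a ha b hb hab => ?_, fun hX u v p hp w hwp hw =>
    (hX w hw).eq_or_eq_of_mem_support_s17 p hp hwp⟩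
  by_contra hnab
  rcases ha with rfl | hxa
  · rcases hb with rfl | hxb
    exacts [hab rfl, hnab hxb]
  rcases hb with rfl | hxb
  · exact hnab hxa.symm
  exact not_positionable_of_adj_of_adj hx hxa hxb hab hnab (hX a b)

lemma gpt_eq_simplicialNum [Finite V] (G : SimpleGraph V) : gpt G = simplicialNum G := by
  have hmem : simplicialNum G ∈ {n | ∃ X : Set V, IsTotalGPSet G X ∧ X.ncard = n} :=
    ⟨_, isTotalGPSet_iff_forall_isSimplicial.mpr fun _ hx => hx, rfl⟩
  have hle : ∀ n ∈ {n | ∃ X : Set V, IsTotalGPSet G X ∧ X.ncard = n}, n ≤ simplicialNum G := by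
    rintro _ ⟨X, hX, rfl⟩
    exact Set.ncard_le_ncard (isTotalGPSet_iff_forall_isSimplicial.mp hX)
  exact le_antisymm (csSup_le ⟨_, hmem⟩ hle) (le_csSup ⟨_, hle⟩ hmem)

end TotalGeneralPosition

section LexProd

variable {α β : Type*} {G : SimpleGraph α} {H : SimpleGraph β}

lemma closedNbhd_lexProd_top (g : α) (h : β) :
    closedNbhd (LexProd G ⊤) (g, h) = closedNbhd G g ×ˢ Set.univ := by
  ext ⟨g', h'⟩
  simp only [closedNbhd, LexProd, top_adj, Set.mem_insert_iff, mem_neighborSet, Prod.mk.injEq,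
    Set.mem_prod, Set.mem_univ, and_true]
  by_cases hg : g = g' <;> by_cases hh : h = h' <;> simp_all [eq_comm]

lemma isSimplicial_lexProd_top_iff (g : α) (h : β) :
    IsSimplicial (LexProd G ⊤) (g, h) ↔ IsSimplicial G g := by
  simp only [IsSimplicial, closedNbhd_lexProd_top, Set.mem_prod, Set.mem_univ, and_true,
    Prod.forall]
  refine ⟨fun hs a ha b hb hab => ?_, fun hs a h₁ ha b h₂ hb hne => ?_⟩
  · rcases hs a h ha b h hb (by simpa using hab) with hadj | ⟨rfl, _⟩
    exacts [hadj, absurd rfl hab]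
  · by_cases hab : a = b
    · subst hab
      exact .inr ⟨rfl, (top_adj _ _).mpr fun h => hne (Prod.ext rfl h)⟩
    · exact .inl (hs a ha b hb hab)

lemma not_isSimplicial_lexProd {g g' : α} (hgg' : G.Adj g g') (hH : H ≠ ⊤) (h : β) :
    ¬ IsSimplicial (LexProd G H) (g, h) := by
  obtain ⟨b, b', hbb', hnadj⟩ := ne_top_iff_exists_not_adj.mp hH
  intro hs
  rcases hs (g', b) (.inr (.inl hgg')) (g', b') (.inr (.inl hgg')) (by simp [hbb'])
    with hadj | ⟨-, hadj⟩
  exacts [G.loopless.irrefl _ hadj, hnadj hadj]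

end LexProd

theorem gpt_lexProd_general {α β : Type*} [Fintype α] [Fintype β]
    (G : SimpleGraph α) (H : SimpleGraph β) (hG : G.Connected)
    (h2G : 2 ≤ Fintype.card α) :
    ((∀ u v : β, u ≠ v → H.Adj u v) →
      gpt (LexProd G H) = simplicialNum G * Fintype.card β) ∧
    (¬ (∀ u v : β, u ≠ v → H.Adj u v) → gpt (LexProd G H) = 0) := by
  simp only [← eq_top_iff_forall_ne_adj, gpt_eq_simplicialNum, simplicialNum]
  refine ⟨fun hH => ?_, fun hH => ?_⟩
  · subst hH
    have hset : {x : α × β | IsSimplicial (LexProd G ⊤) x} = {g | IsSimplicial G g} ×ˢ Set.univ :=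
      Set.ext fun ⟨g, h⟩ => by simp [isSimplicial_lexProd_top_iff]
    rw [hset, Set.ncard_prod, Set.ncard_univ, Nat.card_eq_fintype_card]
  · have : Nontrivial α := Fintype.one_lt_card_iff_nontrivial.mp h2G
    convert Set.ncard_empty (α × β)
    refine Set.eq_empty_of_forall_notMem fun ⟨g, h⟩ => ?_
    obtain ⟨g', hgg'⟩ := hG.preconnected.exists_adj_of_nontrivial g
    exact not_isSimplicial_lexProd hgg' hH h

/-- gp_t(G ∘ H) = s(G)·n(H) if H is complete, and 0 otherwise. -/
theorem gpt_lexProd {α β : Type*} [Fintype α] [Fintype β]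
    (G : SimpleGraph α) (H : SimpleGraph β) (hG : G.Connected) (hH : H.Connected)
    (h2G : 2 ≤ Fintype.card α) (h2H : 2 ≤ Fintype.card β) :
    ((∀ u v : β, u ≠ v → H.Adj u v) →
      gpt (LexProd G H) = simplicialNum G * Fintype.card β) ∧
    (¬ (∀ u v : β, u ≠ v → H.Adj u v) → gpt (LexProd G H) = 0) :=
  gpt_lexProd_general G H hG h2G
end
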